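/- arXiv:2601.10924 — 3 statements merged into one kernel-verified Lean document; each statement's English description precedes it below -/
import Mathlib

section
/- Let θ : ℝ → ℝ be continuously differentiable, let A : ℝ³ → ℝ be continuous, and let u : ℝ³ → ℂ be continuously differentiable with compact support. Set v := u ∘ 𝔏 and Ã := A ∘ 𝔏, where 𝔏 is the twist map associated with θ. Then ∫_{ℝ³} ( |∂₁u|² + |i·∂₂u + A·u|² + |∂₃u|² ) dx = ∫_{ℝ³} ( |i·∂_{t₂}v + Ã·v·cos θ(s)|² + |i·∂_{t₃}v + Ã·v·sin θ(s)|² + |∂_s v + θ'(s)·∂_α v|² ) ds dt₂ dt₃, where both integrals are with respect to Lebesgue measure on ℝ³. (This is the change of variables bringing the magnetic quadratic form with vector potential (0,A,0) on the twisted tube into straightened coordinates.) -/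
/-!
The twist map is, fibrewise over `s`, the rotation of the `(t₂, t₃)`-plane by the angle `-θ(s)`,
so it preserves Lebesgue measure and the first integral is the integral of its own integrand
composed with `𝔏`. Pointwise, the chain rule shows that `(∂_{t₂}v, ∂_{t₃}v)` is the rotated
gradient `(∂₂u, ∂₃u) ∘ 𝔏`, so the first two terms on the right are the rotation of the pair
`(i∂₂u + Au, i∂₃u) ∘ 𝔏` and have the same total squared norm; and the `s`-derivative of `v` picks
up the extra term `-θ' (∂_α u) ∘ 𝔏`, which `θ' ∂_α v` cancels because the angular derivative is
rotation invariant.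
-/

open MeasureTheory

/-- The twist map `𝔏(s,t₂,t₃) = (s, t₂cos θ(s) + t₃ sin θ(s), t₃cos θ(s) − t₂ sin θ(s))`. -/
noncomputable def twistMap (θ : ℝ → ℝ) (p : ℝ × ℝ × ℝ) : ℝ × ℝ × ℝ :=
  (p.1,
   p.2.1 * Real.cos (θ p.1) + p.2.2 * Real.sin (θ p.1),
   p.2.2 * Real.cos (θ p.1) - p.2.1 * Real.sin (θ p.1))

/-- Partial derivative in the first coordinate of a function on `ℝ³`. -/
noncomputable def pd1 {E : Type*} [NormedAddCommGroup E] [NormedSpace ℝ E]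
    (F : ℝ × ℝ × ℝ → E) (p : ℝ × ℝ × ℝ) : E :=
  deriv (fun x => F (x, p.2.1, p.2.2)) p.1

/-- Partial derivative in the second coordinate of a function on `ℝ³`. -/
noncomputable def pd2 {E : Type*} [NormedAddCommGroup E] [NormedSpace ℝ E]
    (F : ℝ × ℝ × ℝ → E) (p : ℝ × ℝ × ℝ) : E :=
  deriv (fun x => F (p.1, x, p.2.2)) p.2.1

/-- Partial derivative in the third coordinate of a function on `ℝ³`. -/
noncomputable def pd3 {E : Type*} [NormedAddCommGroup E] [NormedSpace ℝ E]
    (F : ℝ × ℝ × ℝ → E) (p : ℝ × ℝ × ℝ) : E :=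
  deriv (fun x => F (p.1, p.2.1, x)) p.2.2

/-- The angular derivative `∂_α F := t₂ ∂_{t₃}F − t₃ ∂_{t₂}F` of a function on `ℝ³`. -/
noncomputable def angDeriv (F : ℝ × ℝ × ℝ → ℂ) (p : ℝ × ℝ × ℝ) : ℂ :=
  (p.2.1 : ℂ) * pd3 F p - (p.2.2 : ℂ) * pd2 F p

noncomputable def planeRotation (φ : ℝ) (t : ℝ × ℝ) : ℝ × ℝ :=
  (t.1 * Real.cos φ + t.2 * Real.sin φ, t.2 * Real.cos φ - t.1 * Real.sin φ)

theorem measurePreserving_planeRotation (φ : ℝ) :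
    MeasurePreserving (planeRotation φ) volume volume := by
  set f := Matrix.toLin (Module.Basis.finTwoProd ℝ) (Module.Basis.finTwoProd ℝ)
    !![Real.cos φ, Real.sin φ; -Real.sin φ, Real.cos φ]
  have hf : planeRotation φ = f := by
    funext t
    rw [Matrix.toLin_finTwoProd_apply]
    exact Prod.ext (by simp only [planeRotation]; ring) (by simp only [planeRotation]; ring)
  have hdet : LinearMap.det f = 1 := by
    rw [LinearMap.det_toLin, Matrix.det_fin_two_of]
    linear_combination Real.cos_sq_add_sin_sq φ
  refine ⟨hf ▸ f.continuous_of_finiteDimensional.measurable, ?_⟩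
  rw [hf, Measure.map_linearMap_addHaar_eq_smul_addHaar volume (by simp [hdet]), hdet]
  simp

theorem measurePreserving_twistMap {θ : ℝ → ℝ} (hθ : Measurable θ) :
    MeasurePreserving (twistMap θ) volume volume := by
  have hmeas : Measurable fun p : ℝ × ℝ × ℝ => planeRotation (θ p.1) p.2 := by
    unfold planeRotation; fun_prop
  have h := (MeasurePreserving.id (volume : Measure ℝ)).skew_product hmeas
    (Filter.Eventually.of_forall fun s => (measurePreserving_planeRotation (θ s)).map_eq)
  rwa [← Measure.volume_eq_prod] at h

theorem twistMap_neg_twistMap (θ : ℝ → ℝ) (p : ℝ × ℝ × ℝ) :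
    twistMap (-θ) (twistMap θ p) = p := by
  obtain ⟨s, t₂, t₃⟩ := p
  have h := Real.cos_sq_add_sin_sq (θ s)
  simp only [twistMap, Pi.neg_apply, Real.cos_neg, Real.sin_neg, Prod.mk.injEq, true_and]
  exact ⟨by linear_combination t₂ * h, by linear_combination t₃ * h⟩

theorem measurableEmbedding_twistMap {θ : ℝ → ℝ} (hθ : Continuous θ) :
    MeasurableEmbedding (twistMap θ) :=
  (by unfold twistMap; fun_prop : Continuous (twistMap θ)).measurableEmbedding
    (Function.LeftInverse.injective (twistMap_neg_twistMap θ))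

section PartialDerivatives

variable {E : Type*} [NormedAddCommGroup E] [NormedSpace ℝ E]

theorem fderiv_apply_eq_pd {u : ℝ × ℝ × ℝ → E} {q : ℝ × ℝ × ℝ} (hu : DifferentiableAt ℝ u q)
    (a b c : ℝ) : fderiv ℝ u q (a, b, c) = a • pd1 u q + b • pd2 u q + c • pd3 u q := by
  have h1 : pd1 u q = fderiv ℝ u q (1, 0, 0) := (hu.hasFDerivAt.comp_hasDerivAt q.1
    ((hasDerivAt_id _).prodMk ((hasDerivAt_const _ _).prodMk (hasDerivAt_const _ _)))).deriv
  have h2 : pd2 u q = fderiv ℝ u q (0, 1, 0) := (hu.hasFDerivAt.comp_hasDerivAt q.2.1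
    ((hasDerivAt_const _ _).prodMk ((hasDerivAt_id _).prodMk (hasDerivAt_const _ _)))).deriv
  have h3 : pd3 u q = fderiv ℝ u q (0, 0, 1) := (hu.hasFDerivAt.comp_hasDerivAt q.2.2
    ((hasDerivAt_const _ _).prodMk ((hasDerivAt_const _ _).prodMk (hasDerivAt_id _)))).deriv
  have hsplit : ((a, b, c) : ℝ × ℝ × ℝ) = a • (1, 0, 0) + b • (0, 1, 0) + c • (0, 0, 1) := by
    simp
  rw [h1, h2, h3, hsplit, map_add, map_add, map_smul, map_smul, map_smul]

variable (θ : ℝ → ℝ) {u : ℝ × ℝ × ℝ → E} {p : ℝ × ℝ × ℝ}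

theorem pd2_comp_twistMap (hu : DifferentiableAt ℝ u (twistMap θ p)) :
    pd2 (u ∘ twistMap θ) p
      = Real.cos (θ p.1) • pd2 u (twistMap θ p) - Real.sin (θ p.1) • pd3 u (twistMap θ p) := by
  obtain ⟨s, t₂, t₃⟩ := p
  have hline : HasDerivAt (fun x => twistMap θ (s, x, t₃))
      (0, Real.cos (θ s), -Real.sin (θ s)) t₂ := by
    simp only [twistMap]
    exact (hasDerivAt_const _ _).prodMk (((hasDerivAt_mul_const _).add_const _).prodMk
      ((hasDerivAt_mul_const _).const_sub _))
  refine (hu.hasFDerivAt.comp_hasDerivAt t₂ hline).deriv.trans ?_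
  rw [fderiv_apply_eq_pd hu]
  simp [sub_eq_add_neg]

theorem pd3_comp_twistMap (hu : DifferentiableAt ℝ u (twistMap θ p)) :
    pd3 (u ∘ twistMap θ) p
      = Real.sin (θ p.1) • pd2 u (twistMap θ p) + Real.cos (θ p.1) • pd3 u (twistMap θ p) := by
  obtain ⟨s, t₂, t₃⟩ := p
  have hline : HasDerivAt (fun x => twistMap θ (s, t₂, x))
      (0, Real.sin (θ s), Real.cos (θ s)) t₃ := by
    simp only [twistMap]
    exact (hasDerivAt_const _ _).prodMk (((hasDerivAt_mul_const _).const_add _).prodMk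
      ((hasDerivAt_mul_const _).sub_const _))
  refine (hu.hasFDerivAt.comp_hasDerivAt t₃ hline).deriv.trans ?_
  rw [fderiv_apply_eq_pd hu]
  simp

theorem pd1_comp_twistMap (hθ : DifferentiableAt ℝ θ p.1)
    (hu : DifferentiableAt ℝ u (twistMap θ p)) :
    pd1 (u ∘ twistMap θ) p = pd1 u (twistMap θ p) + deriv θ p.1 •
      ((twistMap θ p).2.2 • pd2 u (twistMap θ p) - (twistMap θ p).2.1 • pd3 u (twistMap θ p)) := by
  obtain ⟨s, t₂, t₃⟩ := p
  have hcos := (Real.hasDerivAt_cos (θ s)).comp s hθ.hasDerivAt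
  have hsin := (Real.hasDerivAt_sin (θ s)).comp s hθ.hasDerivAt
  have hline : HasDerivAt (fun x => twistMap θ (x, t₂, t₃))
      (1, t₂ * (-Real.sin (θ s) * deriv θ s) + t₃ * (Real.cos (θ s) * deriv θ s),
        t₃ * (-Real.sin (θ s) * deriv θ s) - t₂ * (Real.cos (θ s) * deriv θ s)) s :=
    (hasDerivAt_id s).prodMk (((hcos.const_mul t₂).add (hsin.const_mul t₃)).prodMk
      ((hcos.const_mul t₃).sub (hsin.const_mul t₂)))
  refine (hu.hasFDerivAt.comp_hasDerivAt s hline).deriv.trans ?_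
  rw [fderiv_apply_eq_pd hu]
  simp only [twistMap, one_smul, smul_sub, smul_smul]
  module

end PartialDerivatives

section AngularDerivative

variable (θ : ℝ → ℝ) {u : ℝ × ℝ × ℝ → ℂ} {p : ℝ × ℝ × ℝ}

theorem angDeriv_comp_twistMap (hu : DifferentiableAt ℝ u (twistMap θ p)) :
    angDeriv (u ∘ twistMap θ) p = angDeriv u (twistMap θ p) := by
  simp only [angDeriv, pd2_comp_twistMap θ hu, pd3_comp_twistMap θ hu, Complex.real_smul,
    twistMap]
  push_cast
  ring

theorem pd1_comp_twistMap_add_angDeriv (hθ : DifferentiableAt ℝ θ p.1)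
    (hu : DifferentiableAt ℝ u (twistMap θ p)) :
    pd1 (u ∘ twistMap θ) p + deriv θ p.1 * angDeriv (u ∘ twistMap θ) p
      = pd1 u (twistMap θ p) := by
  rw [pd1_comp_twistMap θ hθ hu, angDeriv_comp_twistMap θ hu, angDeriv]
  simp only [Complex.real_smul]
  ring

end AngularDerivative

theorem norm_smul_sub_sq_add_norm_smul_add_sq {F : Type*} [NormedAddCommGroup F]
    [InnerProductSpace ℝ F] {c s : ℝ} (hcs : c ^ 2 + s ^ 2 = 1) (x y : F) :
    ‖c • x - s • y‖ ^ 2 + ‖s • x + c • y‖ ^ 2 = ‖x‖ ^ 2 + ‖y‖ ^ 2 := by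
  rw [norm_sub_sq_real, norm_add_sq_real]
  simp only [norm_smul, real_inner_smul_left, real_inner_smul_right, mul_pow, Real.norm_eq_abs,
    sq_abs]
  linear_combination (‖x‖ ^ 2 + ‖y‖ ^ 2) * hcs

theorem magneticIntegrand_comp_twistMap (θ : ℝ → ℝ) (A : ℝ × ℝ × ℝ → ℝ) {u : ℝ × ℝ × ℝ → ℂ}
    {p : ℝ × ℝ × ℝ} (hθ : DifferentiableAt ℝ θ p.1) (hu : DifferentiableAt ℝ u (twistMap θ p)) :
    ‖Complex.I * pd2 (u ∘ twistMap θ) p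
        + ((A ∘ twistMap θ) p : ℂ) * (u ∘ twistMap θ) p * (Real.cos (θ p.1) : ℂ)‖ ^ 2
      + ‖Complex.I * pd3 (u ∘ twistMap θ) p
        + ((A ∘ twistMap θ) p : ℂ) * (u ∘ twistMap θ) p * (Real.sin (θ p.1) : ℂ)‖ ^ 2
      + ‖pd1 (u ∘ twistMap θ) p + ((deriv θ p.1 : ℝ) : ℂ) * angDeriv (u ∘ twistMap θ) p‖ ^ 2
    = ‖pd1 u (twistMap θ p)‖ ^ 2
      + ‖Complex.I * pd2 u (twistMap θ p) + (A (twistMap θ p) : ℂ) * u (twistMap θ p)‖ ^ 2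
      + ‖pd3 u (twistMap θ p)‖ ^ 2 := by
  set q := twistMap θ p
  set X := Complex.I * pd2 u q + (A q : ℂ) * u q
  have h₂ : Complex.I * pd2 (u ∘ twistMap θ) p + (A q : ℂ) * u q * (Real.cos (θ p.1) : ℂ)
      = Real.cos (θ p.1) • X - Real.sin (θ p.1) • (Complex.I * pd3 u q) := by
    simp only [X, pd2_comp_twistMap θ hu, Complex.real_smul]
    ring
  have h₃ : Complex.I * pd3 (u ∘ twistMap θ) p + (A q : ℂ) * u q * (Real.sin (θ p.1) : ℂ)
      = Real.sin (θ p.1) • X + Real.cos (θ p.1) • (Complex.I * pd3 u q) := by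
    simp only [X, pd3_comp_twistMap θ hu, Complex.real_smul]
    ring
  rw [Function.comp_apply, Function.comp_apply, h₂, h₃, pd1_comp_twistMap_add_angDeriv θ hθ hu,
    norm_smul_sub_sq_add_norm_smul_add_sq (Real.cos_sq_add_sin_sq _), norm_mul, Complex.norm_I,
    one_mul]
  ring

theorem stmt_3_general (θ : ℝ → ℝ) (hθ : ContDiff ℝ 1 θ)
    (A : ℝ × ℝ × ℝ → ℝ)
    (u : ℝ × ℝ × ℝ → ℂ) (hu : ContDiff ℝ 1 u)
    (v : ℝ × ℝ × ℝ → ℂ) (hv : v = u ∘ twistMap θ)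
    (Atil : ℝ × ℝ × ℝ → ℝ) (hAtil : Atil = A ∘ twistMap θ) :
    ∫ p : ℝ × ℝ × ℝ,
        (‖pd1 u p‖ ^ 2 + ‖Complex.I * pd2 u p + (A p : ℂ) * u p‖ ^ 2 + ‖pd3 u p‖ ^ 2)
    = ∫ p : ℝ × ℝ × ℝ,
        (‖Complex.I * pd2 v p + (Atil p : ℂ) * v p * (Real.cos (θ p.1) : ℂ)‖ ^ 2
          + ‖Complex.I * pd3 v p + (Atil p : ℂ) * v p * (Real.sin (θ p.1) : ℂ)‖ ^ 2
          + ‖pd1 v p + (Complex.ofReal (deriv θ p.1)) * angDeriv v p‖ ^ 2) := by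
  subst hv hAtil
  rw [← (measurePreserving_twistMap hθ.continuous.measurable).integral_comp
    (measurableEmbedding_twistMap hθ.continuous)]
  congr 1 with p
  exact (magneticIntegrand_comp_twistMap θ A (hθ.differentiable one_ne_zero p.1)
    (hu.differentiable one_ne_zero _)).symm

/-- change of variables bringing the magnetic quadratic form with vector
potential `(0,A,0)` on the twisted tube into straightened coordinates:
`∫_{ℝ³} (|∂₁u|² + |i·∂₂u + A·u|² + |∂₃u|²)
  = ∫_{ℝ³} (|i·∂_{t₂}v + Ã·v·cos θ(s)|² + |i·∂_{t₃}v + Ã·v·sin θ(s)|²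
      + |∂_s v + θ'(s)·∂_α v|²)`. -/
theorem stmt_3 (θ : ℝ → ℝ) (hθ : ContDiff ℝ 1 θ)
    (A : ℝ × ℝ × ℝ → ℝ) (hA : Continuous A)
    (u : ℝ × ℝ × ℝ → ℂ) (hu : ContDiff ℝ 1 u) (hu' : HasCompactSupport u)
    (v : ℝ × ℝ × ℝ → ℂ) (hv : v = u ∘ twistMap θ)
    (Atil : ℝ × ℝ × ℝ → ℝ) (hAtil : Atil = A ∘ twistMap θ) :
    ∫ p : ℝ × ℝ × ℝ,
        (‖pd1 u p‖ ^ 2 + ‖Complex.I * pd2 u p + (A p : ℂ) * u p‖ ^ 2 + ‖pd3 u p‖ ^ 2)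
    = ∫ p : ℝ × ℝ × ℝ,
        (‖Complex.I * pd2 v p + (Atil p : ℂ) * v p * (Real.cos (θ p.1) : ℂ)‖ ^ 2
          + ‖Complex.I * pd3 v p + (Atil p : ℂ) * v p * (Real.sin (θ p.1) : ℂ)‖ ^ 2
          + ‖pd1 v p + (Complex.ofReal (deriv θ p.1)) * angDeriv v p‖ ^ 2) :=
  stmt_3_general θ hθ A u hu v hv Atil hAtil
end

section
/- Let θ : ℝ → ℝ be differentiable, A : ℝ³ → ℝ differentiable, and set Ã := A ∘ 𝔏, where 𝔏 is the twist map associated with θ. Then at every point (s,t₂,t₃) ∈ ℝ³: ∂_{t₂}( Ã·sin θ(s) ) − ∂_{t₃}( Ã·cos θ(s) ) = −(∂₃A) ∘ 𝔏, i.e. the two-dimensional magnetic field (in the variables t₂,t₃, at each fixed s) generated by the vector potential (Ã·cos θ(s), Ã·sin θ(s)) equals −∂₃A evaluated at 𝔏(s,t₂,t₃), where ∂₃A denotes the partial derivative of A with respect to its third coordinate. -/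
/-!
At fixed `s`, the twist map is the rotation of the `(t₂, t₃)`-plane by the angle `θ(s)`, and the
factors `sin θ(s)`, `cos θ(s)` are constant along the lines on which `∂_{t₂}` and `∂_{t₃}` act.
By the chain rule both partial derivatives of `Ã` are values of `L := DA(𝔏(s,t₂,t₃))` at the
rotated unit vectors `(0, cos θ, -sin θ)` and `(0, sin θ, cos θ)`, and the combination
`sin θ · L(0, cos θ, -sin θ) - cos θ · L(0, sin θ, cos θ)` collapses to `-L(0,0,1)` because
`sin² θ + cos² θ = 1`.
-/

open Real

section

variable {E : Type*} [NormedAddCommGroup E] [NormedSpace ℝ E]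

theorem pd2_mul_fst (G : ℝ × ℝ × ℝ → ℝ) (f : ℝ → ℝ) (p : ℝ × ℝ × ℝ) :
    pd2 (fun q => G q * f q.1) p = pd2 G p * f p.1 :=
  deriv_mul_const_field (f p.1)

theorem pd3_mul_fst (G : ℝ × ℝ × ℝ → ℝ) (f : ℝ → ℝ) (p : ℝ × ℝ × ℝ) :
    pd3 (fun q => G q * f q.1) p = pd3 G p * f p.1 :=
  deriv_mul_const_field (f p.1)

theorem pd3_eq_fderiv {F : ℝ × ℝ × ℝ → E} {p : ℝ × ℝ × ℝ} (hF : DifferentiableAt ℝ F p) :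
    pd3 F p = fderiv ℝ F p (0, 0, 1) := by
  have hline : HasDerivAt (fun x : ℝ => (p.1, p.2.1, x)) ((0 : ℝ), (0 : ℝ), (1 : ℝ)) p.2.2 :=
    (hasDerivAt_const _ _).prodMk ((hasDerivAt_const _ _).prodMk (hasDerivAt_id _))
  exact (hF.hasFDerivAt.comp_hasDerivAt _ hline).deriv

theorem hasDerivAt_twistMap_snd (θ : ℝ → ℝ) (p : ℝ × ℝ × ℝ) :
    HasDerivAt (fun x => twistMap θ (p.1, x, p.2.2))
      ((0 : ℝ), cos (θ p.1), -sin (θ p.1)) p.2.1 :=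
  (hasDerivAt_const _ _).prodMk <|
    ((hasDerivAt_mul_const (cos (θ p.1))).add_const (p.2.2 * sin (θ p.1))).prodMk
      ((hasDerivAt_mul_const (sin (θ p.1))).const_sub (p.2.2 * cos (θ p.1)))

theorem hasDerivAt_twistMap_thd (θ : ℝ → ℝ) (p : ℝ × ℝ × ℝ) :
    HasDerivAt (fun x => twistMap θ (p.1, p.2.1, x))
      ((0 : ℝ), sin (θ p.1), cos (θ p.1)) p.2.2 :=
  (hasDerivAt_const _ _).prodMk <|
    ((hasDerivAt_mul_const (sin (θ p.1))).const_add (p.2.1 * cos (θ p.1))).prodMk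
      ((hasDerivAt_mul_const (cos (θ p.1))).sub_const (p.2.1 * sin (θ p.1)))

theorem pd2_comp_twistMap_s11 {F : ℝ × ℝ × ℝ → E} {θ : ℝ → ℝ} {p : ℝ × ℝ × ℝ}
    (hF : DifferentiableAt ℝ F (twistMap θ p)) :
    pd2 (F ∘ twistMap θ) p = fderiv ℝ F (twistMap θ p) (0, cos (θ p.1), -sin (θ p.1)) :=
  (hF.hasFDerivAt.comp_hasDerivAt _ (hasDerivAt_twistMap_snd θ p)).deriv

theorem pd3_comp_twistMap_s11 {F : ℝ × ℝ × ℝ → E} {θ : ℝ → ℝ} {p : ℝ × ℝ × ℝ}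
    (hF : DifferentiableAt ℝ F (twistMap θ p)) :
    pd3 (F ∘ twistMap θ) p = fderiv ℝ F (twistMap θ p) (0, sin (θ p.1), cos (θ p.1)) :=
  (hF.hasFDerivAt.comp_hasDerivAt _ (hasDerivAt_twistMap_thd θ p)).deriv

theorem ContinuousLinearMap.sin_smul_apply_sub_cos_smul_apply (L : ℝ × ℝ × ℝ →L[ℝ] E) (φ : ℝ) :
    sin φ • L (0, cos φ, -sin φ) - cos φ • L (0, sin φ, cos φ) = -L (0, 0, 1) := by
  rw [← map_smul, ← map_smul, ← map_sub, ← map_neg]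
  simp only [Prod.smul_mk, smul_eq_mul, mul_zero, mul_neg, Prod.mk_sub_mk, sub_self, Prod.neg_mk,
    neg_zero]
  congr 3
  · ring
  · linear_combination -sin_sq_add_cos_sq φ

end

theorem stmt_11_general (θ : ℝ → ℝ)
    (A : ℝ × ℝ × ℝ → ℝ) (hA : Differentiable ℝ A)
    (Atil : ℝ × ℝ × ℝ → ℝ) (hAtil : Atil = A ∘ twistMap θ) (p : ℝ × ℝ × ℝ) :
    pd2 (fun q => Atil q * Real.sin (θ q.1)) p - pd3 (fun q => Atil q * Real.cos (θ q.1)) p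
      = - pd3 A (twistMap θ p) := by
  subst hAtil
  have hAp := hA (twistMap θ p)
  rw [pd2_mul_fst _ (fun x => sin (θ x)), pd3_mul_fst _ (fun x => cos (θ x)),
    pd2_comp_twistMap_s11 hAp, pd3_comp_twistMap_s11 hAp, pd3_eq_fderiv hAp]
  simpa only [smul_eq_mul, mul_comm] using
    (fderiv ℝ A (twistMap θ p)).sin_smul_apply_sub_cos_smul_apply (θ p.1)

/-- with `Ã := A ∘ 𝔏`, at every point `(s,t₂,t₃)` the two-dimensional magnetic
field (in `(t₂,t₃)` at fixed `s`) of the vector potential `(Ã·cos θ(s), Ã·sin θ(s))`, i.e.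
`∂_{t₂}(Ã·sin θ(s)) − ∂_{t₃}(Ã·cos θ(s))`, equals `−(∂₃A) ∘ 𝔏`. -/
theorem stmt_11 (θ : ℝ → ℝ) (hθ : Differentiable ℝ θ)
    (A : ℝ × ℝ × ℝ → ℝ) (hA : Differentiable ℝ A)
    (Atil : ℝ × ℝ × ℝ → ℝ) (hAtil : Atil = A ∘ twistMap θ) (p : ℝ × ℝ × ℝ) :
    pd2 (fun q => Atil q * Real.sin (θ q.1)) p - pd3 (fun q => Atil q * Real.cos (θ q.1)) p
      = - pd3 A (twistMap θ p) :=
  stmt_11_general θ A hA Atil hAtil p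
end

section
/- Let s₀ > 0, let x₁ < x₂ be real numbers, let y₁, y₂ : ℝ → ℝ be continuous with y₁(t₂) ≤ y₂(t₂) and y₂(t₂) − y₁(t₂) ≤ η for all t₂ ∈ (x₁,x₂), where η > 0, and let S := {(t₂,t₃) ∈ ℝ² : x₁ < t₂ < x₂ and y₁(t₂) < t₃ < y₂(t₂)}. Let v : ℝ³ → ℂ be continuously differentiable and suppose v(s, t₂, y₂(t₂)) = 0 for all s ∈ (−s₀,s₀) and all t₂ ∈ (x₁,x₂). Then ∫_{(−s₀,s₀)×S} |v|² ds dt₂ dt₃ ≤ η²·∫_{(−s₀,s₀)×S} |∂_{t₃}v|² ds dt₂ dt₃. -/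
/-!
On each vertical fibre `t₃ ∈ (y₁(t₂), y₂(t₂))` the function `t₃ ↦ v(s, t₂, t₃)` vanishes at the
upper end, so by the fundamental theorem of calculus and Cauchy–Schwarz
`|v|² ≤ (y₂ - y₁) ∫ |∂_{t₃} v|²` pointwise on the fibre. Integrating over the fibre, of length at
most `η`, gives the one-dimensional Poincaré inequality with constant `η²`; Fubini over
`(-s₀, s₀) × S` then adds these fibre inequalities up.
-/

open MeasureTheory

open Set Bornology

variable {α β E : Type*} [NormedAddCommGroup E]

theorem Continuous.integrableOn_of_isBounded [MetricSpace α] [ProperSpace α]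
    [MeasurableSpace α] [OpensMeasurableSpace α] {μ : Measure α} [IsFiniteMeasureOnCompacts μ]
    {f : α → E} (hf : Continuous f) {s : Set α} (hs : IsBounded s) : IntegrableOn f s μ :=
  (hf.continuousOn.integrableOn_compact
    (Metric.isCompact_of_isClosed_isBounded isClosed_closure hs.closure)).mono_set subset_closure

theorem isBounded_regionBetween [PseudoMetricSpace α] {f g : α → ℝ} {s : Set α}
    (hs : IsBounded s) (hf : BddBelow (f '' s)) (hg : BddAbove (g '' s)) :
    IsBounded (regionBetween f g s) := by
  obtain ⟨m, hm⟩ := hf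
  obtain ⟨M, hM⟩ := hg
  refine (hs.prod (Metric.isBounded_Icc m M)).subset ?_
  rintro ⟨x, y⟩ ⟨hx, hy₁, hy₂⟩
  exact ⟨hx, (hm ⟨x, hx, rfl⟩).trans hy₁.le, hy₂.le.trans (hM ⟨x, hx, rfl⟩)⟩

theorem sq_integral_le_measureReal_mul_integral_sq [MeasurableSpace α] {μ : Measure α}
    [IsFiniteMeasure μ] {f : α → ℝ} (hf : MemLp f 2 μ) :
    (∫ x, f x ∂μ) ^ 2 ≤ μ.real univ * ∫ x, f x ^ 2 ∂μ := by
  set m := μ.real univ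
  set a := ∫ x, f x ∂μ
  have hf1 : Integrable f μ := hf.integrable one_le_two
  have hf2 : Integrable (fun x => f x ^ 2) μ := hf.integrable_sq
  have hexp : ∫ x, (m * f x - a) ^ 2 ∂μ = m * (m * ∫ x, f x ^ 2 ∂μ - a ^ 2) := by
    simp_rw [show ∀ x, (m * f x - a) ^ 2 = m ^ 2 * f x ^ 2 - 2 * m * a * f x + a ^ 2 from
      fun x => by ring]
    rw [integral_add (f := fun x => m ^ 2 * f x ^ 2 - 2 * m * a * f x)
      ((hf2.const_mul _).sub (hf1.const_mul _)) (integrable_const _),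
      integral_sub (hf2.const_mul _) (hf1.const_mul _), integral_const_mul, integral_const_mul,
      integral_const, smul_eq_mul]
    ring
  have key : 0 ≤ m * (m * ∫ x, f x ^ 2 ∂μ - a ^ 2) :=
    hexp ▸ integral_nonneg fun x => sq_nonneg _
  rcases eq_zero_or_neZero μ with rfl | _
  · simp [a]
  · nlinarith [(measureReal_univ_pos : 0 < m)]

section Poincare

variable [NormedSpace ℝ E] [CompleteSpace E] {w : ℝ → E} {b c : ℝ}

theorem norm_le_setIntegral_Ioo_norm_deriv (hw : ContDiff ℝ 1 w) (hc : w c = 0) {t : ℝ}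
    (ht : t ∈ Icc b c) : ‖w t‖ ≤ ∫ u in Ioo b c, ‖deriv w u‖ := by
  have hD : Continuous (deriv w) := hw.continuous_deriv le_rfl
  have hftc : ∫ u in t..c, deriv w u = -w t := by
    rw [intervalIntegral.integral_deriv_eq_sub
      (fun x _ => (hw.differentiable one_ne_zero).differentiableAt) (hD.intervalIntegrable _ _),
      hc, zero_sub]
  calc ‖w t‖ = ‖∫ u in t..c, deriv w u‖ := by rw [hftc, norm_neg]
    _ ≤ ∫ u in t..c, ‖deriv w u‖ := intervalIntegral.norm_integral_le_integral_norm ht.2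
    _ ≤ ∫ u in b..c, ‖deriv w u‖ :=
      intervalIntegral.integral_mono_interval ht.1 ht.2 le_rfl
        (Filter.Eventually.of_forall fun u => norm_nonneg _) (hD.norm.intervalIntegrable _ _)
    _ = ∫ u in Ioo b c, ‖deriv w u‖ := by
      rw [intervalIntegral.integral_of_le (ht.1.trans ht.2), integral_Ioc_eq_integral_Ioo]

theorem setIntegral_Ioo_norm_sq_le_of_right_eq_zero (hw : ContDiff ℝ 1 w) (hbc : b ≤ c)
    (hc : w c = 0) :
    ∫ t in Ioo b c, ‖w t‖ ^ 2 ≤ (c - b) ^ 2 * ∫ t in Ioo b c, ‖deriv w t‖ ^ 2 := by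
  set I := ∫ t in Ioo b c, ‖deriv w t‖ ^ 2
  have hD : Continuous fun t => ‖deriv w t‖ := (hw.continuous_deriv le_rfl).norm
  have hD2 : MemLp (fun t => ‖deriv w t‖) 2 (volume.restrict (Ioo b c)) :=
    (memLp_two_iff_integrable_sq hD.aestronglyMeasurable).2
      ((hD.pow 2).integrableOn_Icc.mono_set Ioo_subset_Icc_self)
  have hpt : ∀ t ∈ Ioo b c, ‖w t‖ ^ 2 ≤ (c - b) * I := fun t ht => calc
    ‖w t‖ ^ 2 ≤ (∫ u in Ioo b c, ‖deriv w u‖) ^ 2 :=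
      pow_le_pow_left₀ (norm_nonneg _) (norm_le_setIntegral_Ioo_norm_deriv hw hc
        (Ioo_subset_Icc_self ht)) 2
    _ ≤ (c - b) * I := by
      simpa [measureReal_restrict_apply_univ, Real.volume_real_Ioo_of_le hbc] using
        sq_integral_le_measureReal_mul_integral_sq hD2
  calc ∫ t in Ioo b c, ‖w t‖ ^ 2 ≤ ∫ _ in Ioo b c, (c - b) * I :=
        setIntegral_mono_on ((hw.continuous.norm.pow 2).integrableOn_Icc.mono_set
          Ioo_subset_Icc_self) (integrableOn_const measure_Ioo_lt_top.ne) measurableSet_Ioo hpt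
    _ = (c - b) ^ 2 * I := by
        rw [setIntegral_const, smul_eq_mul, Real.volume_real_Ioo_of_le hbc]; ring

theorem setIntegral_Ioo_norm_sq_le_of_right_eq_zero_of_sub_le (hw : ContDiff ℝ 1 w)
    (hbc : b ≤ c) {η : ℝ} (hη : c - b ≤ η) (hc : w c = 0) :
    ∫ t in Ioo b c, ‖w t‖ ^ 2 ≤ η ^ 2 * ∫ t in Ioo b c, ‖deriv w t‖ ^ 2 :=
  (setIntegral_Ioo_norm_sq_le_of_right_eq_zero hw hbc hc).trans <|
    mul_le_mul_of_nonneg_right (pow_le_pow_left₀ (sub_nonneg.2 hbc) hη 2)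
      (setIntegral_nonneg measurableSet_Ioo fun _ _ => sq_nonneg _)

end Poincare

section Fubini

variable [NormedSpace ℝ E] [MeasurableSpace α] {μ : Measure α} [SFinite μ] {f g : α → ℝ}
  {s : Set α}

theorem setIntegral_regionBetween (hf : Measurable f) (hg : Measurable g) (hs : MeasurableSet s)
    {F : α × ℝ → E} (hF : IntegrableOn F (regionBetween f g s) (μ.prod volume)) :
    ∫ p in regionBetween f g s, F p ∂μ.prod volume
      = ∫ x in s, (∫ y in Ioo (f x) (g x), F (x, y)) ∂μ := by
  have hR := measurableSet_regionBetween hf hg hs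
  rw [← integral_indicator hR, integral_prod _ ((integrable_indicator_iff hR).2 hF),
    ← integral_indicator hs]
  congr 1 with x
  by_cases hx : x ∈ s
  · rw [indicator_of_mem hx, ← integral_indicator measurableSet_Ioo]
    congr 1 with y
    simp [indicator, regionBetween, hx]
  · simp [indicator, regionBetween, hx]

theorem setIntegral_prod_regionBetween [MeasurableSpace β] {ν : Measure β} [SFinite ν]
    (hf : Measurable f) (hg : Measurable g) (hs : MeasurableSet s) {t : Set β}
    {F : β × α × ℝ → E} (hF : IntegrableOn F (t ×ˢ regionBetween f g s) (ν.prod (μ.prod volume))) :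
    ∫ p in t ×ˢ regionBetween f g s, F p ∂ν.prod (μ.prod volume)
      = ∫ a in t, (∫ x in s, (∫ y in Ioo (f x) (g x), F (a, x, y)) ∂μ) ∂ν := by
  rw [setIntegral_prod _ hF]
  have hF' : Integrable F
      ((ν.restrict t).prod ((μ.prod volume).restrict (regionBetween f g s))) := by
    rwa [Measure.prod_restrict]
  refine integral_congr_ae ?_
  filter_upwards [hF'.prod_right_ae] with a ha
  exact setIntegral_regionBetween hf hg hs ha

theorem setIntegral_prod_regionBetween_mono [MeasurableSpace β] {ν : Measure β} [SFinite ν]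
    (hf : Measurable f) (hg : Measurable g) (hs : MeasurableSet s) {t : Set β}
    (ht : MeasurableSet t) {F G : β × α × ℝ → ℝ}
    (hF : IntegrableOn F (t ×ˢ regionBetween f g s) (ν.prod (μ.prod volume)))
    (hG : IntegrableOn G (t ×ˢ regionBetween f g s) (ν.prod (μ.prod volume)))
    (hFs : ∀ a ∈ t, ∀ x ∈ s, IntegrableOn (fun y => F (a, x, y)) (Ioo (f x) (g x)))
    (hGs : ∀ a ∈ t, ∀ x ∈ s, IntegrableOn (fun y => G (a, x, y)) (Ioo (f x) (g x)))
    (hFG : ∀ a ∈ t, ∀ x ∈ s,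
      ∫ y in Ioo (f x) (g x), F (a, x, y) ≤ ∫ y in Ioo (f x) (g x), G (a, x, y)) :
    ∫ p in t ×ˢ regionBetween f g s, F p ∂ν.prod (μ.prod volume)
      ≤ ∫ p in t ×ˢ regionBetween f g s, G p ∂ν.prod (μ.prod volume) := by
  -- Iterating only the integral of `G - F` avoids any integrability of the partial integrals.
  have h := setIntegral_prod_regionBetween (F := fun p => G p - F p) hf hg hs (hG.sub hF)
  rw [integral_sub hG hF] at h
  have : 0 ≤ ∫ a in t, (∫ x in s, (∫ y in Ioo (f x) (g x), G (a, x, y) - F (a, x, y)) ∂μ) ∂ν :=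
    setIntegral_nonneg ht fun a ha => setIntegral_nonneg hs fun x hx => by
      rw [integral_sub (hGs a ha x hx) (hFs a ha x hx), sub_nonneg]
      exact hFG a ha x hx
  linarith

end Fubini

section PartialDeriv

variable [NormedSpace ℝ E] {v : ℝ × ℝ × ℝ → E}

theorem pd3_eq_fderiv_apply {p : ℝ × ℝ × ℝ} (hv : DifferentiableAt ℝ v p) :
    pd3 v p = fderiv ℝ v p (0, 0, 1) :=
  (hv.hasFDerivAt.comp_hasDerivAt p.2.2 ((hasDerivAt_const _ p.1).prodMk
    ((hasDerivAt_const _ p.2.1).prodMk (hasDerivAt_id _)))).deriv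

theorem ContDiff.continuous_pd3 (hv : ContDiff ℝ 1 v) : Continuous (pd3 v) := by
  have hfd : pd3 v = fun p => fderiv ℝ v p (0, 0, 1) :=
    funext fun p => pd3_eq_fderiv_apply (hv.differentiable one_ne_zero p)
  rw [hfd]
  exact (hv.continuous_fderiv one_ne_zero).clm_apply continuous_const

end PartialDeriv

theorem stmt_14_general (s₀ : ℝ) (x₁ x₂ : ℝ)
    (y₁ y₂ : ℝ → ℝ) (hy₁ : Continuous y₁) (hy₂ : Continuous y₂)
    (η : ℝ)
    (hyle : ∀ t₂ ∈ Set.Ioo x₁ x₂, y₁ t₂ ≤ y₂ t₂)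
    (hywidth : ∀ t₂ ∈ Set.Ioo x₁ x₂, y₂ t₂ - y₁ t₂ ≤ η)
    (S : Set (ℝ × ℝ))
    (hS : S = {t : ℝ × ℝ | t.1 ∈ Set.Ioo x₁ x₂ ∧ t.2 ∈ Set.Ioo (y₁ t.1) (y₂ t.1)})
    (v : ℝ × ℝ × ℝ → ℂ) (hv : ContDiff ℝ 1 v)
    (hv0 : ∀ s ∈ Set.Ioo (-s₀) s₀, ∀ t₂ ∈ Set.Ioo x₁ x₂, v (s, t₂, y₂ t₂) = 0) :
    ∫ p in Set.Ioo (-s₀) s₀ ×ˢ S, ‖v p‖ ^ 2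
      ≤ η ^ 2 * ∫ p in Set.Ioo (-s₀) s₀ ×ˢ S, ‖pd3 v p‖ ^ 2 := by
  obtain rfl : S = regionBetween y₁ y₂ (Ioo x₁ x₂) := hS
  have hint : ∀ {F : ℝ × ℝ × ℝ → ℝ}, Continuous F →
      IntegrableOn F (Ioo (-s₀) s₀ ×ˢ regionBetween y₁ y₂ (Ioo x₁ x₂)) :=
    fun hF => hF.integrableOn_of_isBounded <| Metric.isBounded_Ioo _ _ |>.prod <|
      isBounded_regionBetween (Metric.isBounded_Ioo _ _)
        ((isCompact_Icc.image hy₁).bddBelow.mono (image_mono Ioo_subset_Icc_self))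
        ((isCompact_Icc.image hy₂).bddAbove.mono (image_mono Ioo_subset_Icc_self))
  have hpd3 := hv.continuous_pd3
  have hslice : ∀ {G : ℝ → ℝ} {x : ℝ}, Continuous G → IntegrableOn G (Ioo (y₁ x) (y₂ x)) :=
    fun hG => hG.integrableOn_of_isBounded (Metric.isBounded_Ioo _ _)
  rw [Measure.volume_eq_prod, Measure.volume_eq_prod, ← integral_const_mul]
  refine setIntegral_prod_regionBetween_mono hy₁.measurable hy₂.measurable measurableSet_Ioo
    measurableSet_Ioo (hint (by fun_prop)) (hint (by fun_prop))
    (fun _ _ _ _ => hslice (by fun_prop)) (fun _ _ _ _ => hslice (by fun_prop))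
    fun s hs x hx => ?_
  rw [integral_const_mul]
  exact setIntegral_Ioo_norm_sq_le_of_right_eq_zero_of_sub_le (hv.comp (by fun_prop))
    (hyle x hx) (hywidth x hx) (hv0 s hs x hx)

/-- on the curvilinear strip `S = {(t₂,t₃) : x₁ < t₂ < x₂, y₁(t₂) < t₃ < y₂(t₂)}`
of width at most `η`, if the C¹ function `v` vanishes on the upper boundary
`t₃ = y₂(t₂)` for all `s ∈ (−s₀,s₀)`, then
`∫_{(−s₀,s₀)×S} |v|² ≤ η²·∫_{(−s₀,s₀)×S} |∂_{t₃}v|²`. -/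
theorem stmt_14 (s₀ : ℝ) (hs₀ : 0 < s₀) (x₁ x₂ : ℝ) (hx : x₁ < x₂)
    (y₁ y₂ : ℝ → ℝ) (hy₁ : Continuous y₁) (hy₂ : Continuous y₂)
    (η : ℝ) (hη : 0 < η)
    (hyle : ∀ t₂ ∈ Set.Ioo x₁ x₂, y₁ t₂ ≤ y₂ t₂)
    (hywidth : ∀ t₂ ∈ Set.Ioo x₁ x₂, y₂ t₂ - y₁ t₂ ≤ η)
    (S : Set (ℝ × ℝ))
    (hS : S = {t : ℝ × ℝ | t.1 ∈ Set.Ioo x₁ x₂ ∧ t.2 ∈ Set.Ioo (y₁ t.1) (y₂ t.1)})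
    (v : ℝ × ℝ × ℝ → ℂ) (hv : ContDiff ℝ 1 v)
    (hv0 : ∀ s ∈ Set.Ioo (-s₀) s₀, ∀ t₂ ∈ Set.Ioo x₁ x₂, v (s, t₂, y₂ t₂) = 0) :
    ∫ p in Set.Ioo (-s₀) s₀ ×ˢ S, ‖v p‖ ^ 2
      ≤ η ^ 2 * ∫ p in Set.Ioo (-s₀) s₀ ×ˢ S, ‖pd3 v p‖ ^ 2 :=
  stmt_14_general s₀ x₁ x₂ y₁ y₂ hy₁ hy₂ η hyle hywidth S hS v hv hv0
end
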